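/- Let μ be a Borel probability measure on a standard Borel space X, let κ = (k_1,...,k_n) be a nondecreasing sequence of nonzero integers, and let λ be a finite Borel measure on X^n such that (π_i)_*λ ≪ μ for each i ≤ n, where π_i : X^n → X is the i-th coordinate projection. Then the assignment sending f ∈ L^0(μ,T) to the multiplication operator U_f on L^2(λ,ℂ) given by U_f(h) = (∏_{i≤n} (f∘π_i)^{k_i})·h is a well-defined strongly continuous unitary representation of L^0(μ,T) on L^2(λ,ℂ). -/

import Mathlib

/-! The representation factors as `f ↦ Φ f ↦ M_{Φ f}`, where `Φ f = ∏ⱼ (f ∘ πⱼ)^{kⱼ}` is a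
homomorphism `L⁰(μ, 𝕋) → L⁰(λ, 𝕋)` (well defined because the marginals of `λ` are absolutely
continuous with respect to `μ`) and `M_u` is multiplication by `u` on `L²(λ)`, a unitary whose
adjoint is `M_{u⁻¹}`. For strong continuity, `Φ` preserves convergence in measure, since each
marginal is a finite measure absolutely continuous with respect to `μ` and multiplication on `𝕋` is
isometric; and if `v → u` in measure then
`‖(v - u) h‖₂ ≤ 2 ‖1_{|v - u| ≥ η} h‖₂ + η ‖h‖₂`, whose first term is small by the absolute
continuity of `A ↦ ∫_A |h|²`. -/

open MeasureTheory TopologicalSpace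

noncomputable section

/-- The topology of convergence in measure on the space `L⁰(μ, G) = X →ₘ[μ] G` of
`μ`-equivalence classes of measurable functions. -/
def l0Topology {X G : Type*} [MeasurableSpace X] (μ : Measure X) [MetricSpace G] :
    TopologicalSpace (X →ₘ[μ] G) :=
  TopologicalSpace.generateFrom
    { U | ∃ (f : X →ₘ[μ] G) (ε δ : ℝ), 0 < ε ∧ 0 < δ ∧
        U = { g | μ { x | ε ≤ dist (f x) (g x) } < ENNReal.ofReal δ } }

section

open Filter Topology
open scoped ENNReal NNReal

instance : IsIsometricSMul Circle Circle :=
  ⟨fun a => Isometry.of_dist_eq fun b c => by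
    change dist ((a * b : Circle) : ℂ) (a * c : Circle) = dist (b : ℂ) c
    rw [Circle.coe_mul, Circle.coe_mul, dist_eq_norm, dist_eq_norm, ← mul_sub, norm_mul,
      Circle.norm_coe, one_mul]⟩

namespace MeasureTheory

variable {α ι : Type*} {m : MeasurableSpace α} {μ : Measure α} {l : Filter ι}

theorem tendstoInMeasure_const {E : Type*} [PseudoEMetricSpace E] (g : α → E) :
    TendstoInMeasure μ (fun _ : ι => g) l g := by
  intro ε hε
  simpa [hε.ne'] using tendsto_const_nhds

theorem Measure.AbsolutelyContinuous.tendsto_measure_zero {ν : Measure α} [IsFiniteMeasure ν]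
    [SigmaFinite μ] (hνμ : ν ≪ μ) {s : ι → Set α} (hs : Tendsto (fun i => μ (s i)) l (𝓝 0)) :
    Tendsto (fun i => ν (s i)) l (𝓝 0) := by
  rw [← Measure.withDensity_rnDeriv_eq ν μ hνμ]
  simp_rw [withDensity_apply']
  exact tendsto_setLIntegral_zero (Measure.lintegral_rnDeriv_lt_top ν μ).ne hs

namespace TendstoInMeasure

variable {E : Type*} [EDist E] {f : ι → α → E} {g : α → E}

theorem absolutelyContinuous {ν : Measure α} [IsFiniteMeasure ν] [SigmaFinite μ]
    (hfg : TendstoInMeasure μ f l g) (hνμ : ν ≪ μ) : TendstoInMeasure ν f l g :=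
  fun ε hε => hνμ.tendsto_measure_zero (hfg ε hε)

theorem comp_of_map {β : Type*} [MeasurableSpace β] {ν : Measure β} {π : β → α}
    (hπ : AEMeasurable π ν) (hfg : TendstoInMeasure (ν.map π) f l g) :
    TendstoInMeasure ν (fun i => f i ∘ π) l (g ∘ π) := fun ε hε =>
  tendsto_of_tendsto_of_tendsto_of_le_of_le tendsto_const_nhds (hfg ε hε) (fun _ => zero_le)
    fun _ => Measure.le_map_apply hπ _

theorem mul {G : Type*} [Mul G] [PseudoEMetricSpace G] [IsIsometricSMul G G]
    [IsIsometricSMul Gᵐᵒᵖ G] {f f' : ι → α → G} {g g' : α → G}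
    (hf : TendstoInMeasure μ f l g) (hf' : TendstoInMeasure μ f' l g') :
    TendstoInMeasure μ (fun i x => f i x * f' i x) l (fun x => g x * g' x) := by
  intro ε hε
  have hε₂ : 0 < ε / 2 := ENNReal.half_pos hε.ne'
  refine tendsto_of_tendsto_of_tendsto_of_le_of_le tendsto_const_nhds
    (by simpa using (hf _ hε₂).add (hf' _ hε₂)) (fun _ => zero_le) fun i => ?_
  refine (measure_mono fun x hx => ?_).trans (measure_union_le _ _)
  by_contra hx'
  simp only [Set.mem_union, Set.mem_ofPred_eq, not_or, not_le] at hx hx'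
  have htri : edist (f i x * f' i x) (g x * g' x) ≤ edist (f i x) (g x) + edist (f' i x) (g' x) :=
    calc _ ≤ edist (f i x * f' i x) (g x * f' i x) + edist (g x * f' i x) (g x * g' x) :=
          edist_triangle _ _ _
      _ = _ := by rw [edist_mul_right, edist_mul_left]
  exact hx.not_gt (htri.trans_lt (ENNReal.add_halves ε ▸ ENNReal.add_lt_add hx'.1 hx'.2))

section IsometricGroup

variable {G : Type*} [Group G] [PseudoEMetricSpace G] [IsIsometricSMul G G]
  [IsIsometricSMul Gᵐᵒᵖ G] {f : ι → α → G} {g : α → G}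

theorem inv (hf : TendstoInMeasure μ f l g) :
    TendstoInMeasure μ (fun i x => (f i x)⁻¹) l (fun x => (g x)⁻¹) := by
  simpa only [TendstoInMeasure, edist_inv_inv] using hf

theorem zpow (hf : TendstoInMeasure μ f l g) (k : ℤ) :
    TendstoInMeasure μ (fun i x => f i x ^ k) l (fun x => g x ^ k) := by
  induction k using Int.induction_on with
  | zero => simpa using tendstoInMeasure_const (fun _ => (1 : G))
  | succ k ih => simpa only [zpow_add_one] using ih.mul hf
  | pred k ih => simpa only [zpow_sub_one] using ih.mul hf.inv

end IsometricGroup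

theorem finset_prod {M κ : Type*} [CommMonoid M] [PseudoEMetricSpace M] [IsIsometricSMul M M]
    (s : Finset κ) {f : κ → ι → α → M} {g : κ → α → M}
    (hf : ∀ j ∈ s, TendstoInMeasure μ (f j) l (g j)) :
    TendstoInMeasure μ (fun i x => ∏ j ∈ s, f j i x) l (fun x => ∏ j ∈ s, g j x) := by
  induction s using Finset.cons_induction with
  | empty => simpa using tendstoInMeasure_const (fun _ => (1 : M))
  | cons j s _ ih =>
    simp only [Finset.prod_cons]
    exact (hf j (Finset.mem_cons_self j s)).mul
      (ih fun j' hj' => hf j' (Finset.mem_cons_of_mem hj'))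

end TendstoInMeasure

namespace L2

variable {Y : Type*} [MeasurableSpace Y] {ν : Measure Y}

theorem memLp_top_circle (u : Y →ₘ[ν] Circle) : MemLp (fun y => (u y : ℂ)) ∞ ν :=
  memLp_top_of_bound (continuous_subtype_val.comp_aestronglyMeasurable u.aestronglyMeasurable) 1
    (ae_of_all _ fun _ => (Circle.norm_coe _).le)

def circleMul (u : Y →ₘ[ν] Circle) : Lp ℂ 2 ν →L[ℂ] Lp ℂ 2 ν :=
  (ContinuousLinearMap.mul ℂ ℂ).holderL ν ∞ 2 2 (memLp_top_circle u).toLp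

theorem coeFn_circleMul (u : Y →ₘ[ν] Circle) (h : Lp ℂ 2 ν) :
    ⇑(circleMul u h) =ᵐ[ν] fun y => (u y : ℂ) * h y := by
  filter_upwards [(ContinuousLinearMap.mul ℂ ℂ).coeFn_holder (r := 2)
    (memLp_top_circle u).toLp h, (memLp_top_circle u).coeFn_toLp] with y hy hu
  simp only [circleMul, ContinuousLinearMap.holderL_apply_apply, hy, hu,
    ContinuousLinearMap.mul_apply']

theorem circleMul_one : circleMul (1 : Y →ₘ[ν] Circle) = 1 := by
  ext1 h
  refine Lp.ext ?_
  filter_upwards [coeFn_circleMul 1 h, AEEqFun.coeFn_one (β := Circle) (μ := ν)] with y hy h1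
  rw [hy, h1, Pi.one_apply, Circle.coe_one, one_mul, one_apply_eq_self]

theorem circleMul_mul (u v : Y →ₘ[ν] Circle) : circleMul (u * v) = circleMul u * circleMul v := by
  ext1 h
  refine Lp.ext ?_
  filter_upwards [coeFn_circleMul (u * v) h, coeFn_circleMul u (circleMul v h),
    coeFn_circleMul v h, AEEqFun.coeFn_mul u v] with y huv hu hv hmul
  rw [mul_apply_eq_comp, huv, hu, hv, hmul, Pi.mul_apply, Circle.coe_mul, mul_assoc]

theorem star_circleMul (u : Y →ₘ[ν] Circle) : star (circleMul u) = circleMul u⁻¹ := by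
  rw [ContinuousLinearMap.star_eq_adjoint, eq_comm, ContinuousLinearMap.eq_adjoint_iff]
  intro h₁ h₂
  rw [L2.inner_def, L2.inner_def]
  refine integral_congr_ae ?_
  filter_upwards [coeFn_circleMul u⁻¹ h₁, coeFn_circleMul u h₂, AEEqFun.coeFn_inv u]
    with y h₁y h₂y hinv
  rw [h₁y, h₂y, hinv, Pi.inv_apply, Circle.coe_inv_eq_conj, RCLike.inner_apply,
    RCLike.inner_apply, map_mul, Complex.conj_conj]
  ring

def circleMulRep : (Y →ₘ[ν] Circle) →* unitary (Lp ℂ 2 ν →L[ℂ] Lp ℂ 2 ν) :=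
  MonoidHom.codRestrict ⟨⟨circleMul, circleMul_one⟩, circleMul_mul⟩ _ fun u =>
    Unitary.mem_iff.2 ⟨by simp [star_circleMul, ← circleMul_mul, circleMul_one],
      by simp [star_circleMul, ← circleMul_mul, circleMul_one]⟩

theorem coe_circleMulRep_apply (u : Y →ₘ[ν] Circle) :
    (circleMulRep u : Lp ℂ 2 ν →L[ℂ] Lp ℂ 2 ν) = circleMul u :=
  rfl

variable {ι : Type*} {l : Filter ι}

theorem eLpNorm_circleMul_sub_le (u v : Y →ₘ[ν] Circle) (h : Lp ℂ 2 ν) (η : ℝ≥0) :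
    eLpNorm (⇑(circleMul v h) - ⇑(circleMul u h)) 2 ν ≤
      (2 : ℝ≥0) • eLpNorm ({y | (η : ℝ≥0∞) ≤ edist (v y) (u y)}.indicator h) 2 ν +
        η • eLpNorm h 2 ν := by
  set S := {y | (η : ℝ≥0∞) ≤ edist (v y) (u y)}
  set F : Y → ℂ := fun y => ((v y : ℂ) - u y) * h y
  have hS : MeasurableSet S :=
    measurableSet_le measurable_const (v.stronglyMeasurable.edist u.stronglyMeasurable).measurable
  have hF : AEStronglyMeasurable F ν :=
    ((continuous_subtype_val.comp_aestronglyMeasurable v.aestronglyMeasurable).sub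
      (continuous_subtype_val.comp_aestronglyMeasurable u.aestronglyMeasurable)).mul
      (Lp.aestronglyMeasurable h)
  have hdiff : ⇑(circleMul v h) - ⇑(circleMul u h) =ᵐ[ν] S.indicator F + Sᶜ.indicator F := by
    filter_upwards [coeFn_circleMul v h, coeFn_circleMul u h] with y hv hu
    rw [Set.indicator_self_add_compl, Pi.sub_apply, hv, hu, ← sub_mul]
  have hin : eLpNorm (S.indicator F) 2 ν ≤ (2 : ℝ≥0) • eLpNorm (S.indicator h) 2 ν := by
    refine eLpNorm_le_nnreal_smul_eLpNorm_of_ae_le_mul (ae_of_all _ fun y => ?_) _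
    by_cases hy : y ∈ S
    · simp only [Set.indicator_of_mem hy, F, nnnorm_mul]
      gcongr
      calc ‖(v y : ℂ) - u y‖₊ ≤ ‖(v y : ℂ)‖₊ + ‖(u y : ℂ)‖₊ := nnnorm_sub_le _ _
        _ = 2 := by ext; simp only [NNReal.coe_add, coe_nnnorm, Circle.norm_coe]; norm_num
    · simp [Set.indicator_of_notMem hy]
  have hout : eLpNorm (Sᶜ.indicator F) 2 ν ≤ η • eLpNorm h 2 ν := by
    refine eLpNorm_le_nnreal_smul_eLpNorm_of_ae_le_mul (ae_of_all _ fun y => ?_) _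
    by_cases hy : y ∈ S
    · simp [Set.indicator_of_notMem (Set.notMem_compl_iff.2 hy)]
    · simp only [Set.indicator_of_mem (Set.mem_compl hy), F, nnnorm_mul]
      gcongr
      have hdist : edist (v y) (u y) = ‖(v y : ℂ) - u y‖₊ := edist_eq_enorm_sub (v y : ℂ) (u y)
      have hlt : (‖(v y : ℂ) - u y‖₊ : ℝ≥0∞) < η := by simpa [S, hdist] using hy
      exact_mod_cast hlt.le
  calc eLpNorm (⇑(circleMul v h) - ⇑(circleMul u h)) 2 ν
      = eLpNorm (S.indicator F + Sᶜ.indicator F) 2 ν := eLpNorm_congr_ae hdiff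
    _ ≤ eLpNorm (S.indicator F) 2 ν + eLpNorm (Sᶜ.indicator F) 2 ν :=
        eLpNorm_add_le (hF.indicator hS) (hF.indicator hS.compl) one_le_two
    _ ≤ _ := add_le_add hin hout

theorem tendsto_circleMul_apply {v : ι → Y →ₘ[ν] Circle} {u : Y →ₘ[ν] Circle}
    (hv : TendstoInMeasure ν (fun i => ⇑(v i)) l ⇑u) (h : Lp ℂ 2 ν) :
    Tendsto (fun i => circleMul (v i) h) l (𝓝 (circleMul u h)) := by
  rw [Lp.tendsto_Lp_iff_tendsto_eLpNorm', ENNReal.tendsto_nhds_zero]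
  intro ε hε
  -- `c` is used both as the threshold `η` and as the bound on `‖1_{|v - u| ≥ η} h‖₂`.
  obtain ⟨c, hc, hcε⟩ := ENNReal.exists_nnreal_pos_mul_lt (a := eLpNorm h 2 ν + 2)
    (ENNReal.add_ne_top.2 ⟨(Lp.eLpNorm_lt_top h).ne, ENNReal.ofNat_ne_top⟩) hε.ne'
  obtain ⟨δ, hδ, hind⟩ := (Lp.memLp h).eLpNorm_indicator_le one_le_two ENNReal.ofNat_ne_top
    (NNReal.coe_pos.2 hc)
  filter_upwards [ENNReal.tendsto_nhds_zero.1 (hv c (by exact_mod_cast hc)) _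
    (ENNReal.ofReal_pos.2 hδ)] with i hi
  calc _ ≤ _ := eLpNorm_circleMul_sub_le u (v i) h c
    _ ≤ (2 : ℝ≥0) • ENNReal.ofReal c + c • eLpNorm h 2 ν := by
        gcongr
        exact hind _ (measurableSet_le measurable_const
          ((v i).stronglyMeasurable.edist u.stronglyMeasurable).measurable) hi
    _ = c * (eLpNorm h 2 ν + 2) := by
        rw [ENNReal.ofReal_coe_nnreal, ENNReal.smul_def, ENNReal.smul_def]
        push_cast; ring
    _ ≤ ε := hcε.le

end L2

section ProdZPowEval

variable {X ι : Type*} [MeasurableSpace X] {μ : Measure X} {lam : Measure (ι → X)}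

theorem ae_forall_eval_of_absolutelyContinuous [Countable ι]
    (hac : ∀ i, lam.map (fun x => x i) ≪ μ) {p : X → Prop} (hp : ∀ᵐ y ∂μ, p y) :
    ∀ᵐ x ∂lam, ∀ i, p (x i) :=
  ae_all_iff.2 fun i => Measure.QuasiMeasurePreserving.ae ⟨measurable_pi_apply i, hac i⟩ hp

variable [Fintype ι] (k : ι → ℤ) (hac : ∀ i, lam.map (fun x => x i) ≪ μ)

theorem aestronglyMeasurable_prod_zpow_eval (f : X →ₘ[μ] Circle) :
    AEStronglyMeasurable (fun x : ι → X => ∏ i, f (x i) ^ k i) lam :=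
  (Finset.stronglyMeasurable_fun_prod _ fun i _ => (continuous_zpow (k i)).comp_stronglyMeasurable
    (f.stronglyMeasurable.comp_measurable (measurable_pi_apply i))).aestronglyMeasurable

def prodZPowEval : (X →ₘ[μ] Circle) →* ((ι → X) →ₘ[lam] Circle) where
  toFun f := AEEqFun.mk _ (aestronglyMeasurable_prod_zpow_eval k f)
  map_one' := by
    refine AEEqFun.ext ?_
    filter_upwards [AEEqFun.coeFn_mk _ (aestronglyMeasurable_prod_zpow_eval k 1),
      AEEqFun.coeFn_one (β := Circle) (μ := lam),
      ae_forall_eval_of_absolutelyContinuous hac (AEEqFun.coeFn_one (β := Circle) (μ := μ))]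
      with x hx h1 h1'
    rw [hx, h1, Pi.one_apply]
    exact Finset.prod_eq_one fun i _ => by rw [h1' i, Pi.one_apply, one_zpow]
  map_mul' f g := by
    refine AEEqFun.ext ?_
    filter_upwards [AEEqFun.coeFn_mk _ (aestronglyMeasurable_prod_zpow_eval k (f * g)),
      AEEqFun.coeFn_mk _ (aestronglyMeasurable_prod_zpow_eval k f),
      AEEqFun.coeFn_mk _ (aestronglyMeasurable_prod_zpow_eval k g),
      AEEqFun.coeFn_mul (AEEqFun.mk _ (aestronglyMeasurable_prod_zpow_eval k f))
        (AEEqFun.mk _ (aestronglyMeasurable_prod_zpow_eval k g)),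
      ae_forall_eval_of_absolutelyContinuous hac (AEEqFun.coeFn_mul f g)]
      with x hfg hf hg hmul hmul'
    rw [hfg, hmul, Pi.mul_apply, hf, hg, ← Finset.prod_mul_distrib]
    exact Finset.prod_congr rfl fun i _ => by rw [hmul' i, Pi.mul_apply, mul_zpow]

theorem coeFn_prodZPowEval (f : X →ₘ[μ] Circle) :
    ⇑(prodZPowEval k hac f) =ᵐ[lam] fun x => ∏ i, f (x i) ^ k i :=
  AEEqFun.coeFn_mk (fun x : ι → X => ∏ i, f (x i) ^ k i) _

theorem tendstoInMeasure_prodZPowEval [IsFiniteMeasure lam] [SigmaFinite μ] {γ : Type*}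
    {l : Filter γ} {f : γ → X →ₘ[μ] Circle} {f₀ : X →ₘ[μ] Circle}
    (hf : TendstoInMeasure μ (fun j => ⇑(f j)) l ⇑f₀) :
    TendstoInMeasure lam (fun j => ⇑(prodZPowEval k hac (f j))) l ⇑(prodZPowEval k hac f₀) :=
  (TendstoInMeasure.finset_prod Finset.univ fun i _ =>
    ((hf.absolutelyContinuous (hac i)).comp_of_map
      (measurable_pi_apply i).aemeasurable).zpow (k i)).congr
    (fun j => (coeFn_prodZPowEval k hac (f j)).symm) (coeFn_prodZPowEval k hac f₀).symm

end ProdZPowEval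

theorem tendstoInMeasure_nhds_l0Topology {X G : Type*} [MeasurableSpace X] (μ : Measure X)
    [MetricSpace G] (f : X →ₘ[μ] G) :
    TendstoInMeasure μ (fun g : X →ₘ[μ] G => ⇑g) (@nhds _ (l0Topology μ) f) ⇑f := by
  let := l0Topology (G := G) μ
  rw [tendstoInMeasure_iff_dist]
  intro ε hε
  rw [ENNReal.tendsto_nhds_zero]
  intro δ hδ
  obtain ⟨r, -, hr, hrδ⟩ := ENNReal.lt_iff_exists_real_btwn.1 hδ
  have hopen : IsOpen {g : X →ₘ[μ] G | μ {x | ε ≤ dist (f x) (g x)} < ENNReal.ofReal r} :=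
    TopologicalSpace.isOpen_generateFrom_of_mem ⟨f, ε, r, hε, ENNReal.ofReal_pos.1 hr, rfl⟩
  filter_upwards [hopen.mem_nhds (by simpa [hε.not_ge] using hr)] with g hg
  simpa only [dist_comm] using (hg.trans hrδ).le

end MeasureTheory

end

theorem statement17_general
    {X : Type*} [MeasurableSpace X]
    (μ : Measure X) [IsProbabilityMeasure μ]
    (n : ℕ) (k : Fin n → ℤ)
    (lam : Measure (Fin n → X)) [IsFiniteMeasure lam]
    -- (A1): the marginals of `λ` are absolutely continuous with respect to `μ`
    (hA1 : ∀ j : Fin n, lam.map (fun x => x j) ≪ μ) :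
    -- there is a unitary representation `ρ` of `L⁰(μ, 𝕋)` on `L²(λ, ℂ)` which is strongly
    -- continuous with respect to the topology of convergence in measure ...
    ∃ ρ : (X →ₘ[μ] Circle) →* unitary (Lp ℂ 2 lam →L[ℂ] Lp ℂ 2 lam),
      (∀ h : Lp ℂ 2 lam,
        @Continuous _ _ (l0Topology μ) _
          fun f : X →ₘ[μ] Circle => ((ρ f : Lp ℂ 2 lam →L[ℂ] Lp ℂ 2 lam)) h) ∧
      -- ... and acts by the multiplication operators `U_f h = (∏_j (f ∘ π_j)^{k_j}) · h`
      ∀ (f : X →ₘ[μ] Circle) (h : Lp ℂ 2 lam),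
        ⇑((ρ f : Lp ℂ 2 lam →L[ℂ] Lp ℂ 2 lam) h) =ᵐ[lam]
          fun x => (∏ j, ((f (x j) : ℂ) ^ k j)) * h x := by
  refine ⟨L2.circleMulRep.comp (prodZPowEval k hA1), fun h => ?_, fun f h => ?_⟩
  · let := l0Topology (G := Circle) μ
    exact continuous_iff_continuousAt.2 fun f => L2.tendsto_circleMul_apply
      (tendstoInMeasure_prodZPowEval k hA1 (tendstoInMeasure_nhds_l0Topology μ f)) h
  · filter_upwards [L2.coeFn_circleMul (prodZPowEval k hA1 f) h, coeFn_prodZPowEval k hA1 f]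
      with x hx hf
    rw [MonoidHom.comp_apply, L2.coe_circleMulRep_apply, hx, hf]
    exact congrArg (· * _) ((map_prod Circle.coeHom _ _).trans
      (Finset.prod_congr rfl fun j _ => Circle.coe_zpow _ _))

/-- The representation `σ(κ, λ)` is well defined: for a nondecreasing sequence
`κ = (k_1, …, k_n)` of nonzero integers and a finite Borel measure `λ` on `X^n` whose
marginals are absolutely continuous with respect to `μ` (condition (A1)), the assignment
sending `f ∈ L⁰(μ, 𝕋)` to the operator of multiplication by `∏_j (f ∘ π_j)^{k_j}` on
`L²(λ, ℂ)` is a well-defined strongly continuous unitary representation. -/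
theorem statement17
    {X : Type*} [MeasurableSpace X] [StandardBorelSpace X]
    (μ : Measure X) [IsProbabilityMeasure μ]
    (n : ℕ) (hn : 0 < n) (k : Fin n → ℤ) (hmono : Monotone k) (hk : ∀ i, k i ≠ 0)
    (lam : Measure (Fin n → X)) [IsFiniteMeasure lam]
    -- (A1): the marginals of `λ` are absolutely continuous with respect to `μ`
    (hA1 : ∀ j : Fin n, lam.map (fun x => x j) ≪ μ) :
    -- there is a unitary representation `ρ` of `L⁰(μ, 𝕋)` on `L²(λ, ℂ)` which is strongly
    -- continuous with respect to the topology of convergence in measure ...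
    ∃ ρ : (X →ₘ[μ] Circle) →* unitary (Lp ℂ 2 lam →L[ℂ] Lp ℂ 2 lam),
      (∀ h : Lp ℂ 2 lam,
        @Continuous _ _ (l0Topology μ) _
          fun f : X →ₘ[μ] Circle => ((ρ f : Lp ℂ 2 lam →L[ℂ] Lp ℂ 2 lam)) h) ∧
      -- ... and acts by the multiplication operators `U_f h = (∏_j (f ∘ π_j)^{k_j}) · h`
      ∀ (f : X →ₘ[μ] Circle) (h : Lp ℂ 2 lam),
        ⇑((ρ f : Lp ℂ 2 lam →L[ℂ] Lp ℂ 2 lam) h) =ᵐ[lam]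
          fun x => (∏ j, ((f (x j) : ℂ) ^ k j)) * h x :=
  statement17_general μ n k lam hA1

end
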